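/- Let n, g ∈ ℕ with 2g ≤ n and let w ∈ {0,1}^n. Define f : {0,1}^n → ℤ/4ℤ by f(x) = 2·Σ_{j=1}^{g} x_{2j−1}·x_{2j} + 2·Σ_{i=1}^{n} w_i·x_i, computed in ℤ/4ℤ with the coordinates x_i ∈ {0,1} regarded as elements of ℤ/4ℤ. Then N_1(f) = N_3(f) = 0; if w_i = 1 for some index i with 2g < i ≤ n, then N_0(f) = N_2(f); and otherwise N_0(f) − N_2(f) = (−1)^k · 2^{n−g}, where k is the number of indices j ∈ {1,…,g} with w_{2j−1} = w_{2j} = 1. -/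

import Mathlib

/-! Since `f = 2q` with `q = Σ_j x_{2j-1} x_{2j} + Σ_i w_i x_i`, `f` only takes the values `0`
and `2`, according to the parity of `q`, and `N₀ - N₂` is the character sum `Σ_x (-1)^{q(x)}`.
Splitting the coordinates into the `g` pairs and the `n - 2g` remaining ones, this sum factors into
a product of two-variable sums `Σ_{a,b} (-1)^{ab + ua + vb}`, equal to `-2` if `u = v = 1` and to
`2` otherwise, and one-variable sums `Σ_a (-1)^{ua}`, equal to `0` if `u = 1` and to `2` otherwise.
-/

/-- `Ncount n f c` is the number of 0-1 vectors `x` with `f x = c` in `ℤ/4ℤ`. -/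
def Ncount (n : ℕ) (f : (Fin n → Fin 2) → ZMod 4) (c : ZMod 4) : ℕ :=
  (Finset.univ.filter fun x => f x = c).card

open Finset

def sign2 (t : ZMod 2) : ℤ := if t = 0 then 1 else -1

lemma sign2_add (a b : ZMod 2) : sign2 (a + b) = sign2 a * sign2 b := by
  revert a b; decide

lemma sign2_sum {ι : Type*} (s : Finset ι) (φ : ι → ZMod 2) :
    sign2 (∑ i ∈ s, φ i) = ∏ i ∈ s, sign2 (φ i) := by
  classical
  induction s using Finset.induction_on with
  | empty => rfl
  | insert i s hi ih => rw [sum_insert hi, prod_insert hi, sign2_add, ih]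

lemma sum_sign2 {α : Type*} [Fintype α] (φ : α → ZMod 2) :
    ∑ x, sign2 (φ x) = (#{x | φ x = 0} : ℤ) - #{x | φ x ≠ 0} := by
  simp [sign2, sum_ite, sub_eq_add_neg]

lemma two_mul_eq_ite_castHom (t : ZMod 4) :
    2 * t = if ZMod.castHom (by norm_num : 2 ∣ 4) (ZMod 2) t = 0 then 0 else 2 := by
  revert t; decide

section ZModFourValued

variable {α : Type*} [Fintype α] {f : α → ZMod 4} {φ : α → ZMod 2}

lemma card_filter_eq_one_of_eq_ite (hf : ∀ x, f x = if φ x = 0 then 0 else 2) :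
    #{x | f x = 1} = 0 := by
  simp only [card_eq_zero, filter_eq_empty_iff, hf]
  intro x _; split <;> decide

lemma card_filter_eq_three_of_eq_ite (hf : ∀ x, f x = if φ x = 0 then 0 else 2) :
    #{x | f x = 3} = 0 := by
  simp only [card_eq_zero, filter_eq_empty_iff, hf]
  intro x _; split <;> decide

lemma card_filter_eq_zero_sub_card_filter_eq_two_of_eq_ite
    (hf : ∀ x, f x = if φ x = 0 then 0 else 2) :
    (#{x | f x = 0} : ℤ) - #{x | f x = 2} = ∑ x, sign2 (φ x) := by
  rw [sum_sign2]
  congr 3 <;> ext x <;> by_cases h : φ x = 0 <;>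
    simp [hf, h, (by decide : (0 : ZMod 4) ≠ 2), (by decide : (2 : ZMod 4) ≠ 0)]

end ZModFourValued

section PairsAndTail

variable {n g : ℕ}

lemma two_mul_add_lt_of_two_mul_le (hg : 2 * g ≤ n) (j : Fin g) (b : Fin 2) :
    2 * (j : ℕ) + b < n := by
  omega

lemma two_mul_add_lt_of_lt_sub (k : Fin (n - 2 * g)) : 2 * g + (k : ℕ) < n := by omega

def tailIdx (g : ℕ) (k : Fin (n - 2 * g)) : Fin n := ⟨2 * g + k, two_mul_add_lt_of_lt_sub k⟩

variable (hg : 2 * g ≤ n)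

def pairLeft (j : Fin g) : Fin n := ⟨2 * j, two_mul_add_lt_of_two_mul_le hg j 0⟩

def pairRight (j : Fin g) : Fin n := ⟨2 * j + 1, two_mul_add_lt_of_two_mul_le hg j 1⟩

def pairTailEquiv : Fin g × Fin 2 ⊕ Fin (n - 2 * g) ≃ Fin n :=
  (finProdFinEquiv.sumCongr (Equiv.refl _)).trans (finSumFinEquiv.trans (finCongr (by omega)))

lemma pairTailEquiv_inl_zero (j : Fin g) : pairTailEquiv hg (.inl (j, 0)) = pairLeft hg j := by
  ext; simp [pairTailEquiv, pairLeft, finProdFinEquiv]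

lemma pairTailEquiv_inl_one (j : Fin g) : pairTailEquiv hg (.inl (j, 1)) = pairRight hg j := by
  ext; simp [pairTailEquiv, pairRight, finProdFinEquiv, add_comm]

lemma pairTailEquiv_inr (k : Fin (n - 2 * g)) : pairTailEquiv hg (.inr k) = tailIdx g k := by
  ext; simp [pairTailEquiv, tailIdx, mul_comm]

lemma sum_fin_eq_sum_pairs_add_sum_tail {M : Type*} [AddCommMonoid M] (h : Fin n → M) :
    ∑ i, h i = ∑ j, (h (pairLeft hg j) + h (pairRight hg j)) + ∑ k, h (tailIdx g k) := by
  simp only [← (pairTailEquiv hg).sum_comp, Fintype.sum_sum_type, Fintype.sum_prod_type,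
    Fin.sum_univ_two, pairTailEquiv_inl_zero, pairTailEquiv_inl_one, pairTailEquiv_inr]

def pairTailArrowEquiv (α : Type*) :
    (Fin g → α × α) × (Fin (n - 2 * g) → α) ≃ (Fin n → α) :=
  (((Equiv.arrowCongr (Equiv.refl _) (piFinTwoEquiv fun _ => α).symm).trans
      (Equiv.curry _ _ _).symm).prodCongr (Equiv.refl _)).trans
    ((Equiv.sumArrowEquivProdArrow _ _ _).symm.trans
      (Equiv.arrowCongr (pairTailEquiv hg) (Equiv.refl α)))

variable {α : Type*} (p : Fin g → α × α) (q : Fin (n - 2 * g) → α)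

lemma pairTailArrowEquiv_apply_pairLeft (j : Fin g) :
    pairTailArrowEquiv hg α (p, q) (pairLeft hg j) = (p j).1 := by
  simp [pairTailArrowEquiv, ← pairTailEquiv_inl_zero hg]

lemma pairTailArrowEquiv_apply_pairRight (j : Fin g) :
    pairTailArrowEquiv hg α (p, q) (pairRight hg j) = (p j).2 := by
  simp [pairTailArrowEquiv, ← pairTailEquiv_inl_one hg]

lemma pairTailArrowEquiv_apply_tailIdx (k : Fin (n - 2 * g)) :
    pairTailArrowEquiv hg α (p, q) (tailIdx g k) = q k := by
  simp [pairTailArrowEquiv, ← pairTailEquiv_inr hg]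

lemma sum_prod_pairs_mul_prod_tail [Fintype α] [DecidableEq α] {R : Type*} [CommSemiring R]
    (A : Fin g → α → α → R) (B : Fin (n - 2 * g) → α → R) :
    ∑ x : Fin n → α, (∏ j, A j (x (pairLeft hg j)) (x (pairRight hg j))) *
        ∏ k, B k (x (tailIdx g k)) =
      (∏ j, ∑ a, ∑ b, A j a b) * ∏ k, ∑ a, B k a := by
  rw [← (pairTailArrowEquiv hg α).sum_comp, Fintype.sum_prod_type]
  simp only [pairTailArrowEquiv_apply_pairLeft, pairTailArrowEquiv_apply_pairRight,
    pairTailArrowEquiv_apply_tailIdx, ← sum_mul_sum, ← Fintype.sum_prod_type', Fintype.prod_sum]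

end PairsAndTail

section QuadraticForm

variable {n g : ℕ} (hg : 2 * g ≤ n) (w : Fin n → Fin 2)

def quadForm (x : Fin n → Fin 2) : ZMod 2 :=
  ∑ j, ((x (pairLeft hg j) : ℕ) : ZMod 2) * ((x (pairRight hg j) : ℕ) : ZMod 2) +
    ∑ i, ((w i : ℕ) : ZMod 2) * ((x i : ℕ) : ZMod 2)

lemma sign2_quadForm (x : Fin n → Fin 2) :
    sign2 (quadForm hg w x) =
      (∏ j, sign2
        (((x (pairLeft hg j) : ℕ) : ZMod 2) * ((x (pairRight hg j) : ℕ) : ZMod 2) +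
          ((w (pairLeft hg j) : ℕ) : ZMod 2) * ((x (pairLeft hg j) : ℕ) : ZMod 2) +
          ((w (pairRight hg j) : ℕ) : ZMod 2) * ((x (pairRight hg j) : ℕ) : ZMod 2))) *
        ∏ k, sign2 (((w (tailIdx g k) : ℕ) : ZMod 2) * ((x (tailIdx g k) : ℕ) : ZMod 2)) := by
  rw [quadForm, sum_fin_eq_sum_pairs_add_sum_tail hg, ← add_assoc, ← sum_add_distrib, sign2_add,
    sign2_sum, sign2_sum]
  simp only [add_assoc]

lemma sum_sign2_pair (u v : Fin 2) :
    ∑ a : Fin 2, ∑ b : Fin 2, sign2 (((a : ℕ) : ZMod 2) * ((b : ℕ) : ZMod 2) +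
        ((u : ℕ) : ZMod 2) * ((a : ℕ) : ZMod 2) + ((v : ℕ) : ZMod 2) * ((b : ℕ) : ZMod 2)) =
      (if u = 1 ∧ v = 1 then -1 else 1) * 2 := by
  revert u v; decide

lemma sum_sign2_single (u : Fin 2) :
    ∑ a : Fin 2, sign2 (((u : ℕ) : ZMod 2) * ((a : ℕ) : ZMod 2)) = if u = 0 then 2 else 0 := by
  revert u; decide

lemma sum_sign2_quadForm :
    ∑ x, sign2 (quadForm hg w x) =
      (∏ j, (if w (pairLeft hg j) = 1 ∧ w (pairRight hg j) = 1 then -1 else 1) * 2) *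
        ∏ k, if w (tailIdx g k) = 0 then 2 else 0 := by
  simp only [sign2_quadForm]
  rw [sum_prod_pairs_mul_prod_tail hg
    (fun j (a b : Fin 2) => sign2 (((a : ℕ) : ZMod 2) * ((b : ℕ) : ZMod 2) +
      ((w (pairLeft hg j) : ℕ) : ZMod 2) * ((a : ℕ) : ZMod 2) +
      ((w (pairRight hg j) : ℕ) : ZMod 2) * ((b : ℕ) : ZMod 2)))
    (fun k (a : Fin 2) => sign2 (((w (tailIdx g k) : ℕ) : ZMod 2) * ((a : ℕ) : ZMod 2)))]
  simp only [sum_sign2_pair, sum_sign2_single]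

lemma sum_sign2_quadForm_of_exists (h : ∃ i : Fin n, 2 * g ≤ i ∧ w i = 1) :
    ∑ x, sign2 (quadForm hg w x) = 0 := by
  obtain ⟨i, hi, hwi⟩ := h
  have hk : tailIdx g ⟨i - 2 * g, by omega⟩ = i := Fin.ext (by simp [tailIdx]; omega)
  rw [sum_sign2_quadForm]
  refine mul_eq_zero_of_right _ (prod_eq_zero (mem_univ ⟨i - 2 * g, by omega⟩) ?_)
  simp [hk, hwi]

lemma sum_sign2_quadForm_of_forall (h : ∀ i : Fin n, 2 * g ≤ i → w i = 0) :
    ∑ x, sign2 (quadForm hg w x) =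
      (-1) ^ #{j | w (pairLeft hg j) = 1 ∧ w (pairRight hg j) = 1} * 2 ^ (n - g) := by
  have htail (k : Fin (n - 2 * g)) : w (tailIdx g k) = 0 := h _ (Nat.le_add_right _ _)
  rw [sum_sign2_quadForm, prod_mul_distrib, prod_ite, prod_const_one, mul_one,
    Fintype.prod_congr _ _ fun k => if_pos (htail k)]
  simp only [prod_const, card_univ, Fintype.card_fin]
  rw [mul_assoc, ← pow_add]
  congr 2
  omega

end QuadraticForm

theorem stmt_2 (n g : ℕ) (hg : 2 * g ≤ n) (w : Fin n → Fin 2)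
    (f : (Fin n → Fin 2) → ZMod 4)
    (hf : ∀ x, f x =
      2 * (∑ j : Fin g, ((x ⟨2 * j.1, by omega⟩ : ℕ) : ZMod 4) *
            ((x ⟨2 * j.1 + 1, by omega⟩ : ℕ) : ZMod 4)) +
      2 * ∑ i : Fin n, ((w i : ℕ) : ZMod 4) * ((x i : ℕ) : ZMod 4)) :
    Ncount n f 1 = 0 ∧ Ncount n f 3 = 0 ∧
    ((∃ i : Fin n, 2 * g ≤ i.1 ∧ w i = 1) → Ncount n f 0 = Ncount n f 2) ∧
    ((∀ i : Fin n, 2 * g ≤ i.1 → w i = 0) →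
      (Ncount n f 0 : ℤ) - (Ncount n f 2 : ℤ) =
        (-1) ^ ((Finset.univ.filter fun j : Fin g =>
            w ⟨2 * j.1, by omega⟩ = 1 ∧ w ⟨2 * j.1 + 1, by omega⟩ = 1).card) *
          2 ^ (n - g)) := by
  have hf₂ : ∀ x, f x = if quadForm hg w x = 0 then 0 else 2 := by
    intro x
    rw [hf, ← mul_add, two_mul_eq_ite_castHom]
    simp only [map_add, map_sum, map_mul, map_natCast, quadForm]
    rfl
  have hdiff := card_filter_eq_zero_sub_card_filter_eq_two_of_eq_ite hf₂
  refine ⟨card_filter_eq_one_of_eq_ite hf₂, card_filter_eq_three_of_eq_ite hf₂, fun h => ?_,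
    fun h => hdiff.trans (sum_sign2_quadForm_of_forall hg w h)⟩
  have := hdiff.trans (sum_sign2_quadForm_of_exists hg w h)
  unfold Ncount
  omega
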